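/- arXiv:2604.25336 — 2 statements merged into one kernel-verified Lean document; each statement's English description precedes it below -/
import Mathlib

section
/- Under the sewing hypotheses, there exists a constant C > 0, depending only on p, η and η̄, such that for all 0 ≤ s ≤ t ≤ T, ‖E[I_{s,t} − A_{s,t} | ℱ_s]‖_{L^p} ≤ C Γ₂ |t − s|^{η̄}. -/
open MeasureTheory Filter
open scoped ENNReal

noncomputable section

/-- `τ 0, …, τ n` is a partition of the interval `[s, t]`. -/
def IsPartition (s t : ℝ) (n : ℕ) (τ : ℕ → ℝ) : Prop :=
  τ 0 = s ∧ τ n = t ∧ ∀ i < n, τ i < τ (i + 1)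

/-- The mesh of the partition `τ 0, …, τ n` is at most `δ`. -/
def MeshLE (n : ℕ) (τ : ℕ → ℝ) (δ : ℝ) : Prop :=
  ∀ i < n, τ (i + 1) - τ i ≤ δ

/-- Riemann sum of a two-parameter process `A` along the partition `τ 0, …, τ n`. -/
def riemannSum {Ω E : Type*} [AddCommMonoid E] (A : ℝ → ℝ → Ω → E)
    (n : ℕ) (τ : ℕ → ℝ) (ω : Ω) : E :=
  ∑ i ∈ Finset.range n, A (τ i) (τ (i + 1)) ω

/-- `I` is the `L^p`-limit of the Riemann sums of `A` over partitions of `[s, t]`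
as the mesh tends to `0`: along every sequence of partitions of `[s, t]` whose
meshes tend to `0`, the Riemann sums converge to `I` in `L^p`. -/
def IsSewingLimit {Ω E : Type*} [MeasurableSpace Ω] [NormedAddCommGroup E]
    (μ : Measure Ω) (p : ℝ≥0∞) (A : ℝ → ℝ → Ω → E) (s t : ℝ) (I : Ω → E) : Prop :=
  ∀ (n : ℕ → ℕ) (τ : ℕ → ℕ → ℝ),
    (∀ k, IsPartition s t (n k) (τ k)) →
    (∀ δ > (0 : ℝ), ∃ K, ∀ k ≥ K, MeshLE (n k) (τ k) δ) →
    Tendsto (fun k => eLpNorm (fun ω => riemannSum A (n k) (τ k) ω - I ω) p μ)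
      atTop (nhds 0)

namespace SewingAux

variable {α : Type*} {m m0 : MeasurableSpace α} {μ : Measure α}
variable {E : Type*} [NormedAddCommGroup E] [NormedSpace ℝ E] [CompleteSpace E]

/-- L¹ contraction of conditional expectation, vector valued. -/
lemma eLpNorm_one_condexp_le (hm : m ≤ m0) [SigmaFinite (μ.trim hm)] (f : α → E) :
    eLpNorm (μ[f|m]) 1 μ ≤ eLpNorm f 1 μ := by
  by_cases hf : Integrable f μ
  swap
  · rw [condExp_of_not_integrable hf, eLpNorm_zero]; exact zero_le
  have h1 : eLpNorm (μ[f|m]) 1 μ = eLpNorm (condExpL1 hm μ f : α → E) 1 μ :=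
    eLpNorm_congr_ae (condExp_ae_eq_condExpL1 hm f)
  have hnorm : ‖condExpL1 hm μ f‖ ≤ ‖hf.toL1 f‖ := by
    rw [condExpL1_eq hf]
    have hop : ‖condExpL1CLM E hm μ‖ ≤ 1 :=
      L1.norm_setToL1_le (dominatedFinMeasAdditive_condExpInd E hm μ) zero_le_one
    calc ‖condExpL1CLM E hm μ (hf.toL1 f)‖ ≤ ‖condExpL1CLM E hm μ‖ * ‖hf.toL1 f‖ :=
          (condExpL1CLM E hm μ).le_opNorm _
    _ ≤ 1 * ‖hf.toL1 f‖ := by gcongr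
    _ = ‖hf.toL1 f‖ := one_mul _
  have h2 : eLpNorm (hf.toL1 f : α → E) 1 μ = eLpNorm f 1 μ :=
    eLpNorm_congr_ae (hf.coeFn_toL1)
  rw [h1, ← h2]
  have hfin1 : eLpNorm (condExpL1 hm μ f : α → E) 1 μ ≠ ∞ := Lp.eLpNorm_ne_top _
  have hfin2 : eLpNorm (hf.toL1 f : α → E) 1 μ ≠ ∞ := Lp.eLpNorm_ne_top _
  rw [← ENNReal.toReal_le_toReal hfin1 hfin2, ← Lp.norm_def, ← Lp.norm_def]
  exact hnorm

lemma integral_norm_condexp_le (hm : m ≤ m0) [SigmaFinite (μ.trim hm)] {f : α → E}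
    (hf : Integrable f μ) :
    ∫ x, ‖(μ[f|m]) x‖ ∂μ ≤ ∫ x, ‖f x‖ ∂μ := by
  rw [integral_norm_eq_lintegral_enorm
      ((stronglyMeasurable_condExp.mono hm).aestronglyMeasurable),
    integral_norm_eq_lintegral_enorm hf.1]
  rw [← eLpNorm_one_eq_lintegral_enorm, ← eLpNorm_one_eq_lintegral_enorm]
  have hne : eLpNorm f 1 μ ≠ ⊤ := by
    rw [eLpNorm_one_eq_lintegral_enorm]; exact hf.2.ne
  exact ENNReal.toReal_mono hne (eLpNorm_one_condexp_le hm f)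

/-- Pointwise a.e. bound: `‖E[f|m]‖ ≤ E[‖f‖|m]`. -/
lemma norm_condexp_le_condexp_norm (hm : m ≤ m0) [IsFiniteMeasure μ] {f : α → E}
    (hf : Integrable f μ) :
    ∀ᵐ x ∂μ, ‖(μ[f|m]) x‖ ≤ (μ[fun x => ‖f x‖|m]) x := by
  haveI : SigmaFinite (μ.trim hm) := inferInstance
  refine ae_le_of_ae_le_trim (hm := hm) ?_
  refine ae_le_of_forall_setIntegral_le (μ := μ.trim hm) ?_ ?_ ?_
  · exact (integrable_condExp.norm).trim hm stronglyMeasurable_condExp.norm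
  · exact integrable_condExp.trim hm stronglyMeasurable_condExp
  intro s hs _
  rw [← setIntegral_trim hm stronglyMeasurable_condExp.norm hs,
    ← setIntegral_trim hm stronglyMeasurable_condExp hs]
  have key : ∫ x in s, ‖(μ[f|m]) x‖ ∂μ ≤ ∫ x in s, ‖f x‖ ∂μ := by
    have h1 : ∫ x in s, ‖(μ[f|m]) x‖ ∂μ = ∫ x, ‖(s.indicator (μ[f|m])) x‖ ∂μ := by
      rw [← integral_indicator (hm s hs)]
      congr 1
      exact funext fun x => (norm_indicator_eq_indicator_norm _ _).symm
    have h2 : ∫ x, ‖(s.indicator (μ[f|m])) x‖ ∂μ = ∫ x, ‖(μ[s.indicator f|m]) x‖ ∂μ := by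
      refine integral_congr_ae ?_
      filter_upwards [condExp_indicator hf hs] with x hx
      rw [hx]
    have h3 : ∫ x, ‖(μ[s.indicator f|m]) x‖ ∂μ ≤ ∫ x, ‖(s.indicator f) x‖ ∂μ :=
      integral_norm_condexp_le hm (hf.indicator (hm s hs))
    have h4 : ∫ x, ‖(s.indicator f) x‖ ∂μ = ∫ x in s, ‖f x‖ ∂μ := by
      rw [← integral_indicator (hm s hs)]
      congr 1
      exact funext fun x => (norm_indicator_eq_indicator_norm _ _)
    rw [h1, h2, ← h4] at *
    exact h3
  refine key.trans (le_of_eq ?_)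
  exact (setIntegral_condExp hm hf.norm hs).symm

/-- tangent line inequality for `x ^ p`, `p ≥ 1`, at a point `a > 0`. -/
lemma tangent_rpow {p : ℝ} (hp : 1 ≤ p) {a x : ℝ} (ha : 0 < a) (hx : 0 ≤ x) :
    a ^ p + p * a ^ (p - 1) * (x - a) ≤ x ^ p := by
  have hs : -1 ≤ x / a - 1 := by
    have : 0 ≤ x / a := div_nonneg hx ha.le
    linarith
  have hB := one_add_mul_self_le_rpow_one_add hs hp
  have h1 : (1 : ℝ) + (x / a - 1) = x / a := by ring
  rw [h1] at hB
  have hap : (0:ℝ) < a ^ p := Real.rpow_pos_of_pos ha p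
  have hmul := mul_le_mul_of_nonneg_left hB hap.le
  have hxa : (x / a) ^ p = x ^ p / a ^ p := Real.div_rpow hx ha.le p
  rw [hxa, mul_div_cancel₀ _ hap.ne'] at hmul
  have ha1 : a ^ (p - 1) = a ^ p / a := by
    rw [Real.rpow_sub ha, Real.rpow_one]
  calc a ^ p + p * a ^ (p - 1) * (x - a)
      = a ^ p * (1 + p * (x / a - 1)) := by
        rw [ha1]; field_simp
    _ ≤ x ^ p := hmul

/-- Conditional Jensen inequality for `x ↦ x ^ p`, `p ≥ 1`, nonnegative `g`. -/
lemma condexp_rpow_le (hm : m ≤ m0) [IsProbabilityMeasure μ] {p : ℝ} (hp : 1 ≤ p)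
    {g : α → ℝ} (hg0 : ∀ x, 0 ≤ g x) (hg : Integrable g μ)
    (hgp : Integrable (fun x => g x ^ p) μ) :
    ∀ᵐ x ∂μ, (μ[g|m]) x ^ p ≤ (μ[fun x => g x ^ p|m]) x := by
  have key : ∀ a : ℝ, 0 < a →
      ∀ᵐ x ∂μ, a ^ p + p * a ^ (p - 1) * ((μ[g|m]) x - a)
        ≤ (μ[fun x => g x ^ p|m]) x := by
    intro a ha
    set c₁ : ℝ := a ^ p - p * a ^ (p - 1) * a with hc₁
    set c₂ : ℝ := p * a ^ (p - 1) with hc₂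
    have haff : Integrable (fun x => c₁ + c₂ * g x) μ :=
      (integrable_const c₁).add (hg.const_mul c₂)
    have hmono : μ[fun x => c₁ + c₂ * g x|m] ≤ᵐ[μ] μ[fun x => g x ^ p|m] := by
      refine condExp_mono haff hgp (Eventually.of_forall fun x => ?_)
      show c₁ + c₂ * g x ≤ g x ^ p
      have h : c₁ + c₂ * g x = a ^ p + p * a ^ (p - 1) * (g x - a) := by ring
      rw [h]; exact tangent_rpow hp ha (hg0 x)
    have hadd : μ[fun x => c₁ + c₂ * g x|m]
        =ᵐ[μ] (fun _ => c₁) + μ[fun x => c₂ * g x|m] := by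
      have h := condExp_add (μ := μ) (m := m) (integrable_const c₁) (hg.const_mul c₂)
      refine h.trans ?_
      have hc := condExp_const hm c₁ (μ := μ)
      filter_upwards [] with x
      simp [hc]
    have hsmul : μ[fun x => c₂ * g x|m] =ᵐ[μ] fun x => c₂ * (μ[g|m]) x := by
      have h := condExp_smul (μ := μ) (m := m) c₂ g
      refine EventuallyEq.trans (condExp_congr_ae ?_) (h.trans ?_)
      · filter_upwards [] with x; simp [smul_eq_mul]
      · filter_upwards [] with x; simp [smul_eq_mul]
    filter_upwards [hmono, hadd, hsmul] with x h1 h2 h3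
    have hfin : c₁ + c₂ * (μ[g|m]) x ≤ (μ[fun x => g x ^ p|m]) x := by
      rw [h2] at h1
      simp only [Pi.add_apply] at h1
      rw [h3] at h1
      exact h1
    calc a ^ p + p * a ^ (p - 1) * ((μ[g|m]) x - a)
        = c₁ + c₂ * (μ[g|m]) x := by ring
      _ ≤ _ := hfin
  have keyQ : ∀ᵐ x ∂μ, ∀ q : ℚ, 0 < (q : ℝ) →
      (q:ℝ) ^ p + p * (q:ℝ) ^ (p - 1) * ((μ[g|m]) x - q)
        ≤ (μ[fun x => g x ^ p|m]) x := by
    rw [ae_all_iff]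
    intro q
    by_cases hq : 0 < (q:ℝ)
    · filter_upwards [key q hq] with x hx _; exact hx
    · filter_upwards [] with x hx; exact absurd hx hq
  have hnn : 0 ≤ᵐ[μ] μ[g|m] := condExp_nonneg (Eventually.of_forall hg0)
  filter_upwards [keyQ, hnn] with x hx hx0
  set y := (μ[g|m]) x with hy
  set M := (μ[fun x => g x ^ p|m]) x with hM
  have hseq : ∀ n : ℕ, ∃ q : ℚ, y < (q:ℝ) ∧ (q:ℝ) < y + 1 / (n + 1) := by
    intro n
    have : y < y + 1 / (n + 1) := by
      have : (0:ℝ) < 1 / (n + 1) := by positivity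
      linarith
    exact exists_rat_btwn this
  choose q hq1 hq2 using hseq
  have htend : Tendsto (fun n => ((q n : ℝ))) atTop (nhds y) := by
    have h1 : Tendsto (fun n : ℕ => y + 1 / (n + 1 : ℝ)) atTop (nhds y) := by
      have := tendsto_one_div_add_atTop_nhds_zero_nat (𝕜 := ℝ)
      have h := tendsto_const_nhds (x := y) (f := atTop (α := ℕ)) |>.add this
      simpa using h
    exact tendsto_of_tendsto_of_tendsto_of_le_of_le tendsto_const_nhds h1
      (fun n => (hq1 n).le) (fun n => (hq2 n).le)
  have hcont : ContinuousAt (fun a : ℝ => a ^ p + p * a ^ (p - 1) * (y - a)) y := by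
    have h1 : ContinuousAt (fun a : ℝ => a ^ p) y :=
      Real.continuousAt_rpow_const y p (Or.inr (by linarith))
    have h2 : ContinuousAt (fun a : ℝ => a ^ (p - 1)) y :=
      Real.continuousAt_rpow_const y (p - 1) (Or.inr (by linarith))
    exact h1.add (((continuousAt_const.mul h2).mul
      (continuousAt_const.sub continuousAt_id)))
  have hlim : Tendsto (fun n => (q n : ℝ) ^ p + p * (q n : ℝ) ^ (p - 1) * (y - q n))
      atTop (nhds (y ^ p)) := by
    have := hcont.tendsto.comp htend
    simpa [Function.comp_def] using this
  refine le_of_tendsto hlim ?_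
  filter_upwards [] with n
  exact hx (q n) (lt_of_le_of_lt hx0 (hq1 n))

/-- Lᵖ contraction of the conditional expectation. -/
lemma eLpNorm_condexp_le (hm : m ≤ m0) [IsProbabilityMeasure μ] {p : ℝ} (hp : 1 ≤ p)
    {f : α → E} (hf : MemLp f (ENNReal.ofReal p) μ) :
    eLpNorm (μ[f|m]) (ENNReal.ofReal p) μ ≤ eLpNorm f (ENNReal.ofReal p) μ := by
  have hp0 : (0:ℝ) < p := lt_of_lt_of_le one_pos hp
  have hq1 : (1:ℝ≥0∞) ≤ ENNReal.ofReal p := by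
    rw [← ENNReal.ofReal_one]; exact ENNReal.ofReal_le_ofReal hp
  have hq0 : ENNReal.ofReal p ≠ 0 := by
    simp [ENNReal.ofReal_eq_zero, not_le, hp0]
  have hqt : ENNReal.ofReal p ≠ ∞ := ENNReal.ofReal_ne_top
  have hqr : (ENNReal.ofReal p).toReal = p := ENNReal.toReal_ofReal hp0.le
  have hfi : Integrable f μ := hf.integrable hq1
  set g : α → ℝ := fun x => ‖f x‖ with hgdef
  have hgi : Integrable g μ := hfi.norm
  have hgp : Integrable (fun x => g x ^ p) μ := by
    have := hf.integrable_norm_rpow hq0 hqt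
    simpa [hqr] using this
  have h1 : ∀ᵐ x ∂μ, ‖(μ[f|m]) x‖ ≤ (μ[g|m]) x := norm_condexp_le_condexp_norm hm hfi
  have h2 : ∀ᵐ x ∂μ, (μ[g|m]) x ^ p ≤ (μ[fun x => g x ^ p|m]) x :=
    condexp_rpow_le hm hp (fun x => norm_nonneg _) hgi hgp
  have h3 : 0 ≤ᵐ[μ] μ[g|m] := condExp_nonneg (Eventually.of_forall fun x => norm_nonneg _)
  rw [eLpNorm_eq_lintegral_rpow_enorm_toReal hq0 hqt, eLpNorm_eq_lintegral_rpow_enorm_toReal hq0 hqt, hqr]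
  refine ENNReal.rpow_le_rpow ?_ (by positivity)
  calc ∫⁻ x, (‖(μ[f|m]) x‖₊ : ℝ≥0∞) ^ p ∂μ
      ≤ ∫⁻ x, ENNReal.ofReal ((μ[fun x => g x ^ p|m]) x) ∂μ := by
        refine lintegral_mono_ae ?_
        filter_upwards [h1, h2, h3] with x hx1 hx2 hx3
        have e1 : (‖(μ[f|m]) x‖₊ : ℝ≥0∞) ^ p = ENNReal.ofReal (‖(μ[f|m]) x‖ ^ p) := by
          rw [← enorm_eq_nnnorm, ← ofReal_norm, ← ENNReal.ofReal_rpow_of_nonneg (norm_nonneg _) hp0.le]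
        rw [e1]
        refine ENNReal.ofReal_le_ofReal ?_
        calc ‖(μ[f|m]) x‖ ^ p ≤ ((μ[g|m]) x) ^ p :=
              Real.rpow_le_rpow (norm_nonneg _) hx1 hp0.le
          _ ≤ (μ[fun x => g x ^ p|m]) x := hx2
    _ = ENNReal.ofReal (∫ x, (μ[fun x => g x ^ p|m]) x ∂μ) := by
        rw [ofReal_integral_eq_lintegral_ofReal integrable_condExp
          (condExp_nonneg (Eventually.of_forall fun x => Real.rpow_nonneg (norm_nonneg _) p))]
    _ = ENNReal.ofReal (∫ x, g x ^ p ∂μ) := by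
        congr 1
        exact integral_condExp hm
    _ = ∫⁻ x, ENNReal.ofReal (g x ^ p) ∂μ := by
        rw [ofReal_integral_eq_lintegral_ofReal hgp
          (Eventually.of_forall fun x => Real.rpow_nonneg (norm_nonneg _) p)]
    _ = ∫⁻ x, (‖f x‖₊ : ℝ≥0∞) ^ p ∂μ := by
        refine lintegral_congr fun x => ?_
        rw [← enorm_eq_nnnorm, ← ofReal_norm, ← ENNReal.ofReal_rpow_of_nonneg (norm_nonneg _) hp0.le]

/-- Tower + contraction. -/
lemma eLpNorm_condexp_condexp_le {m₁ m₂ : MeasurableSpace α} (h12 : m₁ ≤ m₂) (h2 : m₂ ≤ m0)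
    [IsProbabilityMeasure μ] {p : ℝ} (hp : 1 ≤ p) {f : α → E}
    (hmem : MemLp (μ[f|m₂]) (ENNReal.ofReal p) μ) :
    eLpNorm (μ[f|m₁]) (ENNReal.ofReal p) μ ≤ eLpNorm (μ[f|m₂]) (ENNReal.ofReal p) μ := by
  haveI : SigmaFinite (μ.trim h2) := inferInstance
  calc eLpNorm (μ[f|m₁]) (ENNReal.ofReal p) μ
      = eLpNorm (μ[μ[f|m₂]|m₁]) (ENNReal.ofReal p) μ :=
        eLpNorm_congr_ae (condExp_condExp_of_le h12 h2).symm
    _ ≤ _ := eLpNorm_condexp_le (h12.trans h2) hp hmem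

lemma sum_range_two_mul {M : Type*} [AddCommMonoid M] (n : ℕ) (f : ℕ → M) :
    ∑ i ∈ Finset.range (2 * n), f i
      = ∑ i ∈ Finset.range n, (f (2 * i) + f (2 * i + 1)) := by
  induction n with
  | zero => simp
  | succ n ih =>
    have h : 2 * (n + 1) = (2 * n) + 1 + 1 := by ring
    rw [h, Finset.sum_range_succ, Finset.sum_range_succ, ih, Finset.sum_range_succ]
    abel

lemma geom_bound {c : ℝ} (hc0 : 0 ≤ c) (hc1 : c < 1) (k : ℕ) :
    ∑ j ∈ Finset.range k, c ^ j ≤ (1 - c)⁻¹ := by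
  have h := Summable.sum_le_tsum (Finset.range k) (fun i _ => by positivity)
    (summable_geometric_of_lt_one hc0 hc1)
  rwa [tsum_geometric_of_lt_one hc0 hc1] at h

end SewingAux
/-- **Stochastic sewing lemma, conditional-expectation bound.** -/
theorem stochastic_sewing_condexp_bound
    (p η η' : ℝ) (hp : 2 ≤ p) (hη : 1 / 2 < η) (hη' : 1 < η') :
    ∃ C : ℝ, 0 < C ∧
      ∀ (Ω : Type) [m0 : MeasurableSpace Ω] (μ : Measure Ω) [IsProbabilityMeasure μ]
        (E : Type) [NormedAddCommGroup E] [NormedSpace ℝ E] [CompleteSpace E]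
        (ℱ : Filtration ℝ m0) (T : ℝ), 0 < T →
      ∀ (A : ℝ → ℝ → Ω → E) (Γ₁ Γ₂ : ℝ), 0 ≤ Γ₁ → 0 ≤ Γ₂ →
      (∀ s t, 0 ≤ s → s ≤ t → t ≤ T → StronglyMeasurable[ℱ t] (A s t)) →
      (∀ s t, 0 ≤ s → s ≤ t → t ≤ T → MemLp (A s t) (ENNReal.ofReal p) μ) →
      (∀ t, 0 ≤ t → t ≤ T → A t t = 0) →
      (∀ s t, 0 ≤ s → s ≤ t → t ≤ T →
        eLpNorm (A s t) (ENNReal.ofReal p) μ ≤ ENNReal.ofReal (Γ₁ * (t - s) ^ η)) →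
      (∀ s u t, 0 ≤ s → s ≤ u → u ≤ t → t ≤ T →
        eLpNorm (μ[fun ω => A s t ω - A s u ω - A u t ω | ℱ s]) (ENNReal.ofReal p) μ
          ≤ ENNReal.ofReal (Γ₂ * (t - s) ^ η')) →
      ∀ (I : ℝ → ℝ → Ω → E),
      (∀ s t, 0 ≤ s → s ≤ t → t ≤ T →
        MemLp (I s t) (ENNReal.ofReal p) μ ∧
          IsSewingLimit μ (ENNReal.ofReal p) A s t (I s t)) →
      ∀ s t, 0 ≤ s → s ≤ t → t ≤ T →
        eLpNorm (μ[fun ω => I s t ω - A s t ω | ℱ s]) (ENNReal.ofReal p) μ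
          ≤ ENNReal.ofReal (C * Γ₂ * (t - s) ^ η') := by
  classical
  set c : ℝ := (2:ℝ) ^ ((1:ℝ) - η') with hcdef
  have hc0 : 0 < c := Real.rpow_pos_of_pos two_pos _
  have hc1 : c < 1 := Real.rpow_lt_one_of_one_lt_of_neg one_lt_two (by linarith)
  refine ⟨(1 - c)⁻¹, inv_pos.mpr (by linarith), ?_⟩
  intro Ω m0 μ hprob E instE instNS instCS ℱ T hT A Γ₁ Γ₂ hΓ₁ hΓ₂ hmeas hmem hzero hbd1 hbd2
    I hI s t hs hst htT
  set C : ℝ := (1 - c)⁻¹ with hCdef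
  have hC : 0 < C := inv_pos.mpr (by linarith)
  have hp1 : (1:ℝ) ≤ p := by linarith
  have hq1 : (1:ℝ≥0∞) ≤ ENNReal.ofReal p := by
    rw [← ENNReal.ofReal_one]; exact ENNReal.ofReal_le_ofReal hp1
  have hq0 : ENNReal.ofReal p ≠ 0 := by
    simp [ENNReal.ofReal_eq_zero, not_le]; linarith
  have hsT : s ≤ T := hst.trans htT
  rcases hst.eq_or_lt with heq | hlt
  · -- degenerate case s = t
    subst heq
    have hA0 : A s s = 0 := hzero s hs hsT
    -- I s s is a.e. zero
    have hlim0 := (hI s s hs le_rfl hsT).2 (fun _ => 0) (fun _ _ => s)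
      (fun k => ⟨rfl, rfl, fun i hi => absurd hi (Nat.not_lt_zero i)⟩)
      (fun δ hδ => ⟨0, fun k _ i hi => absurd hi (Nat.not_lt_zero i)⟩)
    have hconst : (fun _ : ℕ => eLpNorm (fun ω => riemannSum A 0 (fun _ => s) ω - I s s ω)
        (ENNReal.ofReal p) μ) = fun _ => eLpNorm (fun ω => -(I s s ω)) (ENNReal.ofReal p) μ := by
      funext k
      congr 1
      funext ω
      simp [riemannSum]
    rw [hconst] at hlim0
    have h0 : eLpNorm (fun ω => -(I s s ω)) (ENNReal.ofReal p) μ = 0 :=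
      tendsto_nhds_unique tendsto_const_nhds hlim0
    have h0' : eLpNorm (I s s) (ENNReal.ofReal p) μ = 0 := by
      rw [show (fun ω => -(I s s ω)) = -(I s s) from rfl, eLpNorm_neg] at h0
      exact h0
    have hI0 : I s s =ᵐ[μ] 0 :=
      (eLpNorm_eq_zero_iff (hI s s hs le_rfl hsT).1.aestronglyMeasurable hq0).mp h0'
    have hfeq : (fun ω => I s s ω - A s s ω) =ᵐ[μ] 0 := by
      filter_upwards [hI0] with ω hω
      simp [hA0, hω]
    have : μ[fun ω => I s s ω - A s s ω|ℱ s] =ᵐ[μ] 0 := by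
      refine (condExp_congr_ae hfeq).trans ?_
      rw [condExp_zero]
    rw [eLpNorm_congr_ae this, eLpNorm_zero]
    exact zero_le
  · -- main case s < t
    have hts : (0:ℝ) < t - s := by linarith
    set d : ℕ → ℝ := fun k => (t - s) / 2 ^ k with hddef
    set τ : ℕ → ℕ → ℝ := fun k i => s + i * d k with hτdef
    have hd : ∀ k, 0 < d k := fun k => by positivity
    have hτ0 : ∀ k, τ k 0 = s := fun k => by simp [hτdef]
    have hτlast : ∀ k, τ k (2 ^ k) = t := by
      intro k
      have h2 : ((2:ℝ)) ^ k ≠ 0 := by positivity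
      simp only [hτdef, hddef]
      push_cast
      field_simp
      ring
    have hstep : ∀ k i, τ k (i + 1) - τ k i = d k := by
      intro k i
      simp only [hτdef]
      push_cast
      ring
    have hstep' : ∀ k i, τ k i < τ k (i + 1) := by
      intro k i
      have h1 := hstep k i
      have h2 := hd k
      linarith
    have hτ_ge : ∀ k i, s ≤ τ k i := by
      intro k i
      simp only [hτdef]
      have : (0:ℝ) ≤ (i:ℝ) * d k := by positivity
      linarith
    have hτ_le : ∀ k i, i ≤ 2 ^ k → τ k i ≤ t := by
      intro k i hi
      have h1 : (i:ℝ) * d k ≤ ((2:ℝ) ^ k) * d k := by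
        have : (i:ℝ) ≤ (2:ℝ) ^ k := by
          have h := (Nat.cast_le (α := ℝ)).mpr hi
          push_cast at h
          exact h
        exact mul_le_mul_of_nonneg_right this (hd k).le
      have h2 : ((2:ℝ) ^ k) * d k = t - s := by
        have h2' : ((2:ℝ)) ^ k ≠ 0 := by positivity
        simp only [hddef]
        field_simp
      simp only [hτdef]
      linarith
    have hnest : ∀ k i, τ (k + 1) (2 * i) = τ k i := by
      intro k i
      simp only [hτdef, hddef, pow_succ]
      push_cast
      have h2 : ((2:ℝ)) ^ k ≠ 0 := by positivity
      field_simp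
    -- bounds for endpoints
    have hτ0T : ∀ k i, 0 ≤ τ k i := fun k i => hs.trans (hτ_ge k i)
    have hτT : ∀ k i, i ≤ 2 ^ k → τ k i ≤ T := fun k i hi => (hτ_le k i hi).trans htT
    -- integrability of the A's
    have hAint : ∀ u v, 0 ≤ u → u ≤ v → v ≤ T → Integrable (A u v) μ :=
      fun u v h1 h2 h3 => (hmem u v h1 h2 h3).integrable hq1
    have hR_eq : ∀ k, (fun ω => riemannSum A (2 ^ k) (τ k) ω)
        = ∑ i ∈ Finset.range (2 ^ k), A (τ k i) (τ k (i + 1)) := by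
      intro k
      funext ω
      simp [riemannSum, Finset.sum_apply]
    have hRmem : ∀ k, MemLp (fun ω => riemannSum A (2 ^ k) (τ k) ω) (ENNReal.ofReal p) μ := by
      intro k
      rw [hR_eq k]
      refine memLp_finset_sum' _ fun i hi => ?_
      rw [Finset.mem_range] at hi
      exact hmem _ _ (hτ0T k i) (hstep' k i).le (hτT k (i + 1) hi)
    have hRint : ∀ k, Integrable (fun ω => riemannSum A (2 ^ k) (τ k) ω) μ :=
      fun k => (hRmem k).integrable hq1
    have hAst : Integrable (A s t) μ := hAint s t hs hlt.le htT
    have hIint : Integrable (I s t) μ := (hI s t hs hlt.le htT).1.integrable hq1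
    -- arithmetic identity
    have harith : ∀ k : ℕ, (2:ℝ) ^ k * (Γ₂ * d k ^ η') = Γ₂ * (t - s) ^ η' * c ^ k := by
      intro k
      have h2k : (0:ℝ) < (2:ℝ) ^ k := by positivity
      have e1 : ((2:ℝ) ^ (k:ℕ)) = (2:ℝ) ^ ((k:ℕ):ℝ) := (Real.rpow_natCast 2 k).symm
      have e3 : ((2:ℝ) ^ (k:ℕ) : ℝ) ^ η' = (2:ℝ) ^ ((k:ℝ) * η') := by
        rw [e1, ← Real.rpow_mul (by norm_num : (0:ℝ) ≤ 2)]
      have e2 : c ^ (k:ℕ) = (2:ℝ) ^ (((1:ℝ) - η') * k) := by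
        rw [← Real.rpow_natCast c k, hcdef, ← Real.rpow_mul (by norm_num : (0:ℝ) ≤ 2)]
      have hkey : (2:ℝ) ^ ((k:ℕ):ℝ) * ((2:ℝ) ^ ((k:ℝ) * η'))⁻¹
          = (2:ℝ) ^ (((1:ℝ) - η') * k) := by
        rw [← Real.rpow_neg (by norm_num : (0:ℝ) ≤ 2), ← Real.rpow_add two_pos]
        congr 1
        ring
      have hdk : d k ^ η' = (t - s) ^ η' / ((2:ℝ) ^ (k:ℕ) : ℝ) ^ η' :=
        Real.div_rpow hts.le h2k.le η'
      rw [hdk, e3, e2, ← hkey, e1]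
      field_simp
    -- the inductive bound
    have main : ∀ k, eLpNorm (μ[fun ω => riemannSum A (2 ^ k) (τ k) ω - A s t ω|ℱ s])
        (ENNReal.ofReal p) μ
        ≤ ENNReal.ofReal (Γ₂ * (t - s) ^ η' * ∑ j ∈ Finset.range k, c ^ j) := by
      intro k
      induction k with
      | zero =>
        have hz : (fun ω => riemannSum A (2 ^ 0) (τ 0) ω - A s t ω) = (0 : Ω → E) := by
          funext ω
          have e0 : τ 0 0 = s := hτ0 0
          have e1 : τ 0 1 = t := by
            have := hτlast 0
            simpa using this
          simp [riemannSum, e0, e1]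
        rw [hz, condExp_zero, eLpNorm_zero]
        exact zero_le
      | succ k ih =>
        have hL : (0:ℝ) ≤ Γ₂ * (t - s) ^ η' := mul_nonneg hΓ₂ (Real.rpow_nonneg hts.le η')
        set f₁ : Ω → E := fun ω => riemannSum A (2 ^ (k+1)) (τ (k+1)) ω
          - riemannSum A (2 ^ k) (τ k) ω with hf₁
        set f₂ : Ω → E := fun ω => riemannSum A (2 ^ k) (τ k) ω - A s t ω with hf₂
        have hsplit : (fun ω => riemannSum A (2 ^ (k+1)) (τ (k+1)) ω - A s t ω)
            = f₁ + f₂ := by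
          funext ω
          show _ = f₁ ω + f₂ ω
          rw [hf₁, hf₂]
          dsimp only
          abel
        rw [hsplit]
        have hint1 : Integrable f₁ μ := (hRint (k+1)).sub (hRint k)
        have hint2 : Integrable f₂ μ := (hRint k).sub hAst
        have hdiffbd : eLpNorm (μ[f₁|ℱ s]) (ENNReal.ofReal p) μ
            ≤ ENNReal.ofReal (Γ₂ * (t - s) ^ η' * c ^ k) := by
          have h2pow : 2 ^ (k+1) = 2 * 2 ^ k := by ring
          set g : ℕ → Ω → E := fun i => fun ω => A (τ k i) (τ (k+1) (2*i+1)) ω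
            + A (τ (k+1) (2*i+1)) (τ k (i+1)) ω - A (τ k i) (τ k (i+1)) ω with hg
          have hdiff_eq : f₁ = ∑ i ∈ Finset.range (2 ^ k), g i := by
            funext ω
            rw [hf₁]
            show riemannSum A (2 ^ (k+1)) (τ (k+1)) ω - riemannSum A (2 ^ k) (τ k) ω = _
            rw [Finset.sum_apply]
            simp only [riemannSum]
            rw [h2pow, SewingAux.sum_range_two_mul, ← Finset.sum_sub_distrib]
            refine Finset.sum_congr rfl fun i hi => ?_
            have e1 : τ (k+1) (2*i) = τ k i := hnest k i
            have e2 : τ (k+1) (2*i+1+1) = τ k (i+1) := by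
              rw [show 2*i+1+1 = 2*(i+1) by ring, hnest k (i+1)]
            rw [e1, e2, hg]
          -- facts about the triple for each i < 2^k
          have hu0 : ∀ i, 0 ≤ τ k i := fun i => hτ0T k i
          have huv : ∀ i, τ k i ≤ τ (k+1) (2*i+1) := by
            intro i
            rw [← hnest k i]
            exact (hstep' (k+1) (2*i)).le
          have hvw : ∀ i, τ (k+1) (2*i+1) ≤ τ k (i+1) := by
            intro i
            rw [← hnest k (i+1), show 2*(i+1) = 2*i+1+1 by ring]
            exact (hstep' (k+1) (2*i+1)).le
          have hgint : ∀ i ∈ Finset.range (2 ^ k), Integrable (g i) μ := by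
            intro i hi
            rw [Finset.mem_range] at hi
            have hwT : τ k (i+1) ≤ T := hτT k (i+1) hi
            exact ((hAint _ _ (hu0 i) (huv i) ((hvw i).trans hwT)).add
              (hAint _ _ (hs.trans (hτ_ge (k+1) (2*i+1))) (hvw i) hwT)).sub
              (hAint _ _ (hu0 i) (hstep' k i).le hwT)
          have hterm : ∀ i ∈ Finset.range (2 ^ k),
              eLpNorm (μ[g i|ℱ s]) (ENNReal.ofReal p) μ
                ≤ ENNReal.ofReal (Γ₂ * d k ^ η') := by
            intro i hi
            rw [Finset.mem_range] at hi
            have hwT : τ k (i+1) ≤ T := hτT k (i+1) hi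
            set δf : Ω → E := fun ω => A (τ k i) (τ k (i+1)) ω
              - A (τ k i) (τ (k+1) (2*i+1)) ω - A (τ (k+1) (2*i+1)) (τ k (i+1)) ω with hδf
            have hneg : g i = -δf := by
              funext ω
              show g i ω = -(δf ω)
              rw [hg, hδf]
              dsimp only
              abel
            have hbd := hbd2 (τ k i) (τ (k+1) (2*i+1)) (τ k (i+1))
              (hu0 i) (huv i) (hvw i) hwT
            have hmemδ : MemLp (μ[δf|ℱ (τ k i)]) (ENNReal.ofReal p) μ :=
              ⟨(stronglyMeasurable_condExp.mono (ℱ.le _)).aestronglyMeasurable,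
                lt_of_le_of_lt hbd ENNReal.ofReal_lt_top⟩
            calc eLpNorm (μ[g i|ℱ s]) (ENNReal.ofReal p) μ
                = eLpNorm (μ[-δf|ℱ s]) (ENNReal.ofReal p) μ := by rw [hneg]
              _ = eLpNorm (-(μ[δf|ℱ s])) (ENNReal.ofReal p) μ :=
                  eLpNorm_congr_ae (condExp_neg δf _)
              _ = eLpNorm (μ[δf|ℱ s]) (ENNReal.ofReal p) μ := eLpNorm_neg _ _ _
              _ ≤ eLpNorm (μ[δf|ℱ (τ k i)]) (ENNReal.ofReal p) μ :=
                  SewingAux.eLpNorm_condexp_condexp_le (ℱ.mono (hτ_ge k i)) (ℱ.le _)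
                    hp1 hmemδ
              _ ≤ ENNReal.ofReal (Γ₂ * (τ k (i+1) - τ k i) ^ η') := hbd
              _ = ENNReal.ofReal (Γ₂ * d k ^ η') := by rw [hstep k i]
          calc eLpNorm (μ[f₁|ℱ s]) (ENNReal.ofReal p) μ
              = eLpNorm (μ[∑ i ∈ Finset.range (2 ^ k), g i|ℱ s]) (ENNReal.ofReal p) μ := by
                rw [hdiff_eq]
            _ = eLpNorm (∑ i ∈ Finset.range (2 ^ k), μ[g i|ℱ s]) (ENNReal.ofReal p) μ :=
                eLpNorm_congr_ae (condExp_finset_sum hgint _)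
            _ ≤ ∑ i ∈ Finset.range (2 ^ k), eLpNorm (μ[g i|ℱ s]) (ENNReal.ofReal p) μ :=
                eLpNorm_sum_le (fun i _ =>
                  (stronglyMeasurable_condExp.mono (ℱ.le s)).aestronglyMeasurable) hq1
            _ ≤ ∑ _i ∈ Finset.range (2 ^ k), ENNReal.ofReal (Γ₂ * d k ^ η') :=
                Finset.sum_le_sum hterm
            _ = (2 ^ k : ℕ) • ENNReal.ofReal (Γ₂ * d k ^ η') := by
                rw [Finset.sum_const, Finset.card_range]
            _ = ENNReal.ofReal ((2:ℝ) ^ k * (Γ₂ * d k ^ η')) := by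
                rw [nsmul_eq_mul, ← ENNReal.ofReal_natCast (2 ^ k),
                  ← ENNReal.ofReal_mul (by positivity)]
                congr 1
                push_cast
                ring
            _ = ENNReal.ofReal (Γ₂ * (t - s) ^ η' * c ^ k) := by rw [harith k]
        calc eLpNorm (μ[f₁ + f₂|ℱ s]) (ENNReal.ofReal p) μ
            = eLpNorm (μ[f₁|ℱ s] + μ[f₂|ℱ s]) (ENNReal.ofReal p) μ :=
              eLpNorm_congr_ae (condExp_add hint1 hint2 _)
          _ ≤ eLpNorm (μ[f₁|ℱ s]) (ENNReal.ofReal p) μ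
              + eLpNorm (μ[f₂|ℱ s]) (ENNReal.ofReal p) μ :=
              eLpNorm_add_le (stronglyMeasurable_condExp.mono (ℱ.le s)).aestronglyMeasurable
                (stronglyMeasurable_condExp.mono (ℱ.le s)).aestronglyMeasurable hq1
          _ ≤ ENNReal.ofReal (Γ₂ * (t - s) ^ η' * c ^ k)
              + ENNReal.ofReal (Γ₂ * (t - s) ^ η' * ∑ j ∈ Finset.range k, c ^ j) :=
              add_le_add hdiffbd ih
          _ = ENNReal.ofReal (Γ₂ * (t - s) ^ η' * ∑ j ∈ Finset.range (k+1), c ^ j) := by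
              rw [← ENNReal.ofReal_add (mul_nonneg hL (pow_nonneg hc0.le k))
                (mul_nonneg hL (Finset.sum_nonneg fun j _ => pow_nonneg hc0.le j)),
                Finset.sum_range_succ]
              congr 1
              ring
    -- limiting step
    have hpart : ∀ k, IsPartition s t (2 ^ k) (τ k) :=
      fun k => ⟨hτ0 k, hτlast k, fun i _ => hstep' k i⟩
    have hmesh : ∀ δ > (0:ℝ), ∃ K, ∀ k ≥ K, MeshLE (2 ^ k) (τ k) δ := by
      intro δ hδ
      obtain ⟨K, hK⟩ := pow_unbounded_of_one_lt ((t - s)/δ) (one_lt_two : (1:ℝ) < 2)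
      refine ⟨K, fun k hk i _ => ?_⟩
      have h2 : (2:ℝ) ^ K ≤ (2:ℝ) ^ k := pow_le_pow_right₀ (by norm_num) hk
      have hlt2 : (t - s)/δ < (2:ℝ) ^ k := lt_of_lt_of_le hK h2
      rw [div_lt_iff₀ hδ] at hlt2
      rw [hstep k i]
      have hdk : d k = (t - s) / 2 ^ k := rfl
      rw [hdk, div_le_iff₀ (by positivity : (0:ℝ) < (2:ℝ) ^ k)]
      nlinarith [hδ.le, (by positivity : (0:ℝ) < (2:ℝ) ^ k)]
    have hlim := (hI s t hs hlt.le htT).2 (fun k => 2 ^ k) τ hpart hmesh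
    refine ENNReal.le_of_forall_pos_le_add fun ε hε _ => ?_
    have hev : ∀ᶠ k in atTop, eLpNorm (fun ω => riemannSum A (2 ^ k) (τ k) ω - I s t ω)
        (ENNReal.ofReal p) μ ≤ (ε : ℝ≥0∞) :=
      (ENNReal.tendsto_nhds_zero.mp hlim) ε (by exact_mod_cast hε)
    obtain ⟨k, hk⟩ := hev.exists
    set f₁ : Ω → E := fun ω => I s t ω - riemannSum A (2 ^ k) (τ k) ω with hf₁
    set f₂ : Ω → E := fun ω => riemannSum A (2 ^ k) (τ k) ω - A s t ω with hf₂
    have hsplit : (fun ω => I s t ω - A s t ω) = f₁ + f₂ := by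
      funext ω
      show _ = f₁ ω + f₂ ω
      rw [hf₁, hf₂]
      dsimp only
      abel
    rw [hsplit]
    have hint1 : Integrable f₁ μ := hIint.sub (hRint k)
    have hint2 : Integrable f₂ μ := (hRint k).sub hAst
    have hb1 : eLpNorm (μ[f₁|ℱ s]) (ENNReal.ofReal p) μ ≤ (ε : ℝ≥0∞) := by
      refine le_trans (SewingAux.eLpNorm_condexp_le (ℱ.le s) hp1
        ((hI s t hs hlt.le htT).1.sub (hRmem k))) ?_
      have heq : eLpNorm f₁ (ENNReal.ofReal p) μ
          = eLpNorm (fun ω => riemannSum A (2 ^ k) (τ k) ω - I s t ω)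
            (ENNReal.ofReal p) μ := by
        have hneg : f₁ = -(fun ω => riemannSum A (2 ^ k) (τ k) ω - I s t ω) := by
          funext ω
          show f₁ ω = -(_ - _)
          rw [hf₁]
          abel
        rw [hneg, eLpNorm_neg]
      rw [heq]
      exact hk
    have hb2 : eLpNorm (μ[f₂|ℱ s]) (ENNReal.ofReal p) μ
        ≤ ENNReal.ofReal (C * Γ₂ * (t - s) ^ η') := by
      refine (main k).trans (ENNReal.ofReal_le_ofReal ?_)
      have hgeom := SewingAux.geom_bound hc0.le hc1 k
      have hL : (0:ℝ) ≤ Γ₂ * (t - s) ^ η' := mul_nonneg hΓ₂ (Real.rpow_nonneg hts.le η')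
      have hmm := mul_le_mul_of_nonneg_left hgeom hL
      calc Γ₂ * (t - s) ^ η' * ∑ j ∈ Finset.range k, c ^ j
          ≤ Γ₂ * (t - s) ^ η' * (1 - c)⁻¹ := hmm
        _ = C * Γ₂ * (t - s) ^ η' := by rw [hCdef]; ring
    calc eLpNorm (μ[f₁ + f₂|ℱ s]) (ENNReal.ofReal p) μ
        = eLpNorm (μ[f₁|ℱ s] + μ[f₂|ℱ s]) (ENNReal.ofReal p) μ :=
          eLpNorm_congr_ae (condExp_add hint1 hint2 _)
      _ ≤ eLpNorm (μ[f₁|ℱ s]) (ENNReal.ofReal p) μ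
          + eLpNorm (μ[f₂|ℱ s]) (ENNReal.ofReal p) μ :=
          eLpNorm_add_le (stronglyMeasurable_condExp.mono (ℱ.le s)).aestronglyMeasurable
            (stronglyMeasurable_condExp.mono (ℱ.le s)).aestronglyMeasurable hq1
      _ ≤ (ε : ℝ≥0∞) + ENNReal.ofReal (C * Γ₂ * (t - s) ^ η') := add_le_add hb1 hb2
      _ = ENNReal.ofReal (C * Γ₂ * (t - s) ^ η') + ε := add_comm _ _
end
end

section
/- Under the sewing hypotheses, if in addition there exist a constant Γ₃ ≥ 0 and an exponent η̄' > 1 such that ‖E[A_{s,t} | ℱ_s]‖_{L^p} ≤ Γ₃|t − s|^{η̄'} for all 0 ≤ s ≤ t ≤ T, then the sewing limit vanishes identically: I_{s,t} = 0 almost surely for all 0 ≤ s ≤ t ≤ T. -/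
open MeasureTheory Filter
open scoped ENNReal

noncomputable section
set_option maxHeartbeats 4000000

section Aux

/-- A continuous linear functional commutes with conditional expectation. -/
private lemma condexp_clm_comm {Ω : Type*} {E : Type*} [NormedAddCommGroup E] [NormedSpace ℝ E]
    [CompleteSpace E] {m m0 : MeasurableSpace Ω} {μ : Measure Ω} (hm : m ≤ m0)
    [SigmaFinite (μ.trim hm)]
    (φ : E →L[ℝ] ℝ) {f : Ω → E} (hf : Integrable f μ) :
    (fun ω => φ ((μ[f | m]) ω)) =ᵐ[μ] μ[fun ω => φ (f ω) | m] := by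
  refine ae_eq_condExp_of_forall_setIntegral_eq hm (φ.integrable_comp hf) ?_ ?_ ?_
  · intro s _ _
    exact (φ.integrable_comp integrable_condExp).integrableOn
  · intro s hs hμs
    rw [φ.integral_comp_comm integrable_condExp.integrableOn,
      setIntegral_condExp hm hf hs, φ.integral_comp_comm hf.integrableOn]
  · exact (φ.continuous.comp_stronglyMeasurable stronglyMeasurable_condExp).aestronglyMeasurable

/-- Orthogonality: an `m`-measurable `L²` function is orthogonal to an `L²` function whose
conditional expectation with respect to `m` vanishes. -/
private lemma integral_mul_eq_zero_of_condexp {Ω : Type*} {m m0 : MeasurableSpace Ω}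
    {μ : Measure Ω} (hm : m ≤ m0)
    [SigmaFinite (μ.trim hm)] [IsFiniteMeasure μ] {f g : Ω → ℝ}
    (hf2 : MemLp f 2 μ) (hg2 : MemLp g 2 μ)
    (hfm : AEStronglyMeasurable[m] f μ) (hg : μ[g | m] =ᵐ[μ] 0) :
    ∫ ω, f ω * g ω ∂μ = 0 := by
  have hint : Integrable (f * g) μ := by
    have h1 := L2.integrable_inner (𝕜 := ℝ) (hf2.toLp f) (hg2.toLp g)
    have heq : (fun ω => inner ℝ ((hf2.toLp f) ω) ((hg2.toLp g) ω) : Ω → ℝ) =ᵐ[μ] f * g := by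
      filter_upwards [hf2.coeFn_toLp, hg2.coeFn_toLp] with ω h2 h3
      simp [h2, h3, RCLike.inner_apply, mul_comm]
    exact h1.congr heq
  have h1 : ∫ ω, f ω * g ω ∂μ = ∫ ω, (μ[f * g | m]) ω ∂μ := (integral_condExp hm).symm
  have h2 : μ[f * g | m] =ᵐ[μ] f * μ[g | m] :=
    condExp_mul_of_aestronglyMeasurable_left hfm hint (hg2.integrable one_le_two)
  have h3 : f * μ[g | m] =ᵐ[μ] 0 := by
    filter_upwards [hg] with ω hω
    simp [Pi.mul_apply, hω]
  rw [h1, integral_congr_ae (h2.trans h3)]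
  simp

variable {Ω : Type*} {m0 : MeasurableSpace Ω} {μ : Measure Ω}

/-- Pythagoras for pairwise orthogonal vectors. -/
private lemma norm_sum_sq_of_inner_eq_zero {H : Type*} [NormedAddCommGroup H]
    [InnerProductSpace ℝ H] (F : ℕ → H) :
    ∀ m : ℕ, (∀ j < m, ∀ i < j, (inner ℝ (F i) (F j) : ℝ) = 0) →
      ‖∑ i ∈ Finset.range m, F i‖ ^ 2 = ∑ i ∈ Finset.range m, ‖F i‖ ^ 2 := by
  intro m
  induction m with
  | zero => simp
  | succ m ih =>
    intro h
    have horth : (inner ℝ (∑ i ∈ Finset.range m, F i) (F m) : ℝ) = 0 := by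
      rw [sum_inner]
      exact Finset.sum_eq_zero fun i hi =>
        h m (Nat.lt_succ_self m) i (Finset.mem_range.mp hi)
    rw [Finset.sum_range_succ, Finset.sum_range_succ, norm_add_sq_real, horth,
      ih (fun j hj i hi => h j (hj.trans (Nat.lt_succ_self m)) i hi)]
    ring

private lemma coeFn_lp_sum (F : ℕ → Lp ℝ 2 μ) (s : Finset ℕ) :
    ⇑(∑ i ∈ s, F i) =ᵐ[μ] fun ω => ∑ i ∈ s, F i ω := by
  classical
  induction s using Finset.induction with
  | empty =>
    simp only [Finset.sum_empty]
    exact Lp.coeFn_zero (E := ℝ) (p := 2) (μ := μ)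
  | @insert a s ha ih =>
    rw [Finset.sum_insert ha]
    filter_upwards [Lp.coeFn_add (F a) (∑ i ∈ s, F i), ih] with ω h1 h2
    simp only [h1, Pi.add_apply, h2, Finset.sum_insert ha]

/-- Auxiliary limit: `(k+1)^a * (c/(k+1))^e → 0` when `a < e` and `c > 0`. -/
private lemma tendsto_pow_div_rpow (c : ℝ) (hc : 0 < c) (a e : ℝ) (hae : a < e) :
    Tendsto (fun k : ℕ => ((k : ℝ) + 1) ^ a * (c / ((k : ℝ) + 1)) ^ e)
      atTop (nhds 0) := by
  have h1 : ∀ k : ℕ, ((k : ℝ) + 1) ^ a * (c / ((k : ℝ) + 1)) ^ e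
      = c ^ e * ((k : ℝ) + 1) ^ (a - e) := by
    intro k
    have hk : (0 : ℝ) < (k : ℝ) + 1 := by positivity
    rw [Real.div_rpow hc.le hk.le, Real.rpow_sub hk]
    ring
  simp only [h1]
  rw [show (0 : ℝ) = c ^ e * 0 by ring]
  apply Tendsto.const_mul
  have hcomp : Tendsto (fun k : ℕ => ((k : ℝ) + 1)) atTop atTop :=
    tendsto_atTop_add_const_right _ 1 tendsto_natCast_atTop_atTop
  have h2 : Tendsto (fun x : ℝ => x ^ (a - e)) atTop (nhds 0) := by
    have := tendsto_rpow_neg_atTop (by linarith : (0 : ℝ) < e - a)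
    simpa [neg_sub] using this
  exact h2.comp hcomp

end Aux

/-- **Stochastic sewing lemma, vanishing criterion.**  Under the sewing hypotheses,
if moreover `‖E[A s t | ℱ s]‖_{L^p} ≤ Γ₃ (t-s)^η''` for some `Γ₃ ≥ 0` and `η'' > 1`,
then the sewing limit vanishes identically: `I s t = 0` almost surely for all
`0 ≤ s ≤ t ≤ T`. -/
theorem stochastic_sewing_vanishes
    {Ω : Type*} {m0 : MeasurableSpace Ω} {μ : Measure Ω} [IsProbabilityMeasure μ]
    {E : Type*} [NormedAddCommGroup E] [NormedSpace ℝ E] [CompleteSpace E]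
    (ℱ : Filtration ℝ m0) (T : ℝ) (hT : 0 < T)
    (p : ℝ) (hp : 2 ≤ p)
    (A : ℝ → ℝ → Ω → E)
    (hadapted : ∀ s t, 0 ≤ s → s ≤ t → t ≤ T → StronglyMeasurable[ℱ t] (A s t))
    (hmem : ∀ s t, 0 ≤ s → s ≤ t → t ≤ T → MemLp (A s t) (ENNReal.ofReal p) μ)
    (hdiag : ∀ t, 0 ≤ t → t ≤ T → A t t = 0)
    (Γ₁ Γ₂ : ℝ) (hΓ₁ : 0 ≤ Γ₁) (hΓ₂ : 0 ≤ Γ₂)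
    (η η' : ℝ) (hη : 1 / 2 < η) (hη' : 1 < η')
    (hbound : ∀ s t, 0 ≤ s → s ≤ t → t ≤ T →
      eLpNorm (A s t) (ENNReal.ofReal p) μ ≤ ENNReal.ofReal (Γ₁ * (t - s) ^ η))
    (hcond : ∀ s u t, 0 ≤ s → s ≤ u → u ≤ t → t ≤ T →
      eLpNorm (μ[fun ω => A s t ω - A s u ω - A u t ω | ℱ s]) (ENNReal.ofReal p) μ
        ≤ ENNReal.ofReal (Γ₂ * (t - s) ^ η'))
    (Γ₃ η'' : ℝ) (hΓ₃ : 0 ≤ Γ₃) (hη'' : 1 < η'')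
    (hcondA : ∀ s t, 0 ≤ s → s ≤ t → t ≤ T →
      eLpNorm (μ[A s t | ℱ s]) (ENNReal.ofReal p) μ
        ≤ ENNReal.ofReal (Γ₃ * (t - s) ^ η''))
    (I : ℝ → ℝ → Ω → E)
    (hI : ∀ s t, 0 ≤ s → s ≤ t → t ≤ T →
      MemLp (I s t) (ENNReal.ofReal p) μ ∧
        IsSewingLimit μ (ENNReal.ofReal p) A s t (I s t)) :
    ∀ s t, 0 ≤ s → s ≤ t → t ≤ T → I s t =ᵐ[μ] 0 := by
  intro s t hs0 hst htT
  set p' : ℝ≥0∞ := ENNReal.ofReal p with hp'def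
  have hp1 : (1 : ℝ≥0∞) ≤ p' := by
    rw [hp'def, show (1 : ℝ≥0∞) = ENNReal.ofReal 1 by simp]
    exact ENNReal.ofReal_le_ofReal (by linarith)
  have h2p' : (2 : ℝ≥0∞) ≤ p' := by
    rw [hp'def, show (2 : ℝ≥0∞) = ENNReal.ofReal 2 by simp]
    exact ENNReal.ofReal_le_ofReal hp
  have hp'ne : p' ≠ 0 := by
    rw [hp'def, Ne, ENNReal.ofReal_eq_zero, not_le]; linarith
  obtain ⟨hImem, hIlim⟩ := hI s t hs0 hst htT
  rcases eq_or_lt_of_le hst with rfl | hlt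
  · -- degenerate case `s = t` : use the trivial partition with `n = 0`.
    have hpart : ∀ k : ℕ, IsPartition s s 0 (fun _ => s) :=
      fun k => ⟨rfl, rfl, fun i hi => by omega⟩
    have hmesh : ∀ δ > (0 : ℝ), ∃ K, ∀ k ≥ K, MeshLE 0 (fun _ => s) δ :=
      fun δ hδ => ⟨0, fun k _ i hi => by omega⟩
    have hlim := hIlim (fun _ => 0) (fun _ _ => s) hpart hmesh
    have h0 : eLpNorm (fun ω => riemannSum A 0 (fun _ => s) ω - I s s ω) p' μ = 0 :=
      tendsto_nhds_unique tendsto_const_nhds hlim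
    have h1 : eLpNorm (fun ω => -(I s s ω)) p' μ = 0 := by
      simpa [riemannSum] using h0
    rw [show (fun ω => -(I s s ω)) = -(I s s) from rfl, eLpNorm_neg] at h1
    exact (eLpNorm_eq_zero_iff hImem.aestronglyMeasurable hp'ne).mp h1
  -- main case `s < t`
  have hc : (0 : ℝ) < t - s := by linarith
  -- the uniform partitions
  set τ : ℕ → ℕ → ℝ := fun k i => s + (i : ℝ) * ((t - s) / ((k : ℝ) + 1)) with hτdef
  clear_value τ
  have hstep : ∀ k : ℕ, (0 : ℝ) < (t - s) / ((k : ℝ) + 1) := by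
    intro k; positivity
  have hpow : ∀ (k : ℕ) (e : ℝ), 0 ≤ ((t - s) / ((k : ℝ) + 1)) ^ e :=
    fun k e => Real.rpow_nonneg (hstep k).le e
  have hτ0 : ∀ k, τ k 0 = s := by intro k; simp [hτdef]
  have hτgap : ∀ k i, τ k (i + 1) - τ k i = (t - s) / ((k : ℝ) + 1) := by
    intro k i; simp only [hτdef]; push_cast; ring
  have hτmono : ∀ k, Monotone (τ k) := by
    intro k i j hij
    simp only [hτdef]
    have h1 : (i : ℝ) ≤ (j : ℝ) := Nat.cast_le.mpr hij
    nlinarith [hstep k, (hstep k).le]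
  have hτlast : ∀ k : ℕ, τ k (k + 1) = t := by
    intro k
    have hne : ((k : ℝ) + 1) ≠ 0 := by positivity
    simp only [hτdef]
    push_cast
    field_simp
    ring
  have hτpart : ∀ k, IsPartition s t (k + 1) (τ k) := by
    intro k
    refine ⟨hτ0 k, hτlast k, fun i hi => ?_⟩
    have hg1 := hτgap k i
    have hg2 := hstep k
    linarith
  have hτmesh : ∀ δ > (0 : ℝ), ∃ K, ∀ k ≥ K, MeshLE (k + 1) (τ k) δ := by
    intro δ hδ
    refine ⟨⌈(t - s) / δ⌉₊, fun k hk i hi => ?_⟩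
    rw [hτgap k i]
    rw [div_le_iff₀ (by positivity)]
    have h1 : (t - s) / δ ≤ (⌈(t - s) / δ⌉₊ : ℝ) := Nat.le_ceil _
    have h2 : ((⌈(t - s) / δ⌉₊ : ℕ) : ℝ) ≤ (k : ℝ) := Nat.cast_le.mpr hk
    have h3 : (t - s) / δ ≤ (k : ℝ) + 1 := by linarith
    calc t - s = ((t - s) / δ) * δ := by field_simp
    _ ≤ ((k : ℝ) + 1) * δ := by
        apply mul_le_mul_of_nonneg_right h3 hδ.le
    _ = δ * ((k : ℝ) + 1) := by ring
  -- bounds on partition points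
  have hτlb : ∀ k i, s ≤ τ k i := by
    intro k i
    have := hτmono k (Nat.zero_le i)
    rwa [hτ0 k] at this
  have hτub : ∀ k, ∀ i ≤ k + 1, τ k i ≤ t := by
    intro k i hi
    have := hτmono k hi
    rwa [hτlast k] at this
  have hτ0' : ∀ k i, 0 ≤ τ k i := fun k i => hs0.trans (hτlb k i)
  have hτT : ∀ k, ∀ i ≤ k + 1, τ k i ≤ T := fun k i hi => (hτub k i hi).trans htT
  -- convergence of Riemann sums to I s t in L^{p'}
  have hlimS := hIlim (fun k => k + 1) τ hτpart hτmesh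
  -- MemLp of the Riemann sums
  have hmemA : ∀ k, ∀ i < k + 1, MemLp (A (τ k i) (τ k (i + 1))) p' μ := by
    intro k i hi
    exact hmem _ _ (hτ0' k i) (hτmono k (Nat.le_succ i)) (hτT k (i + 1) hi)
  have hmemS : ∀ k, MemLp (fun ω => riemannSum A (k + 1) (τ k) ω) p' μ := by
    intro k
    exact memLp_finset_sum (Finset.range (k + 1))
      (fun i hi => hmemA k i (Finset.mem_range.mp hi))
  -- Main step: for every continuous linear functional φ, φ ∘ (I s t) = 0 a.e.
  have key : ∀ φ : E →L[ℝ] ℝ, (fun ω => φ (I s t ω)) =ᵐ[μ] 0 := by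
    intro φ
    -- the scalar processes
    set Y : ℕ → ℕ → Ω → ℝ := fun k i ω => φ (A (τ k i) (τ k (i + 1)) ω) with hYdef
    set G : ℕ → ℕ → Ω → ℝ := fun k i => μ[Y k i | ℱ (τ k i)] with hGdef
    set d : ℕ → ℕ → Ω → ℝ := fun k i => Y k i - G k i with hddef
    have hC1 : ∀ k : ℕ, 0 ≤ ‖φ‖ * (Γ₁ * ((t - s) / ((k : ℝ) + 1)) ^ η) :=
      fun k => mul_nonneg (norm_nonneg _) (mul_nonneg hΓ₁ (hpow k η))
    have hC3 : ∀ k : ℕ, 0 ≤ ‖φ‖ * (Γ₃ * ((t - s) / ((k : ℝ) + 1)) ^ η'') :=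
      fun k => mul_nonneg (norm_nonneg _) (mul_nonneg hΓ₃ (hpow k η''))
    -- basic facts
    have hSF : ∀ (u : ℝ), SigmaFinite (μ.trim (ℱ.le u)) := fun u => inferInstance
    have hYm : ∀ k, ∀ i < k + 1, MemLp (Y k i) p' μ := by
      intro k i hi
      exact (φ.comp_memLp' (hmemA k i hi))
    have hYb : ∀ k, ∀ i < k + 1, eLpNorm (Y k i) p' μ
        ≤ ENNReal.ofReal (‖φ‖ * (Γ₁ * ((t - s) / ((k : ℝ) + 1)) ^ η)) := by
      intro k i hi
      calc eLpNorm (Y k i) p' μ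
          ≤ ‖φ‖₊ • eLpNorm (A (τ k i) (τ k (i + 1))) p' μ := by
            refine eLpNorm_le_nnreal_smul_eLpNorm_of_ae_le_mul ?_ p'
            exact Eventually.of_forall fun ω => φ.le_opNNNorm _
        _ ≤ ‖φ‖₊ • ENNReal.ofReal (Γ₁ * (τ k (i + 1) - τ k i) ^ η) := by
            have := hbound _ _ (hτ0' k i) (hτmono k (Nat.le_succ i)) (hτT k (i + 1) hi)
            exact mul_le_mul_right this _
        _ = ENNReal.ofReal (‖φ‖ * (Γ₁ * ((t - s) / ((k : ℝ) + 1)) ^ η)) := by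
            rw [hτgap k i, ENNReal.smul_def, smul_eq_mul, ← ENNReal.ofReal_coe_nnreal, coe_nnnorm,
              ← ENNReal.ofReal_mul (norm_nonneg φ)]
    have hGb : ∀ k, ∀ i < k + 1, eLpNorm (G k i) p' μ
        ≤ ENNReal.ofReal (‖φ‖ * (Γ₃ * ((t - s) / ((k : ℝ) + 1)) ^ η'')) := by
      intro k i hi
      have hAint : Integrable (A (τ k i) (τ k (i + 1))) μ :=
        (hmemA k i hi).integrable (le_trans one_le_two h2p')
      have hcomm := condexp_clm_comm (ℱ.le (τ k i)) φ hAint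
      have heq : G k i =ᵐ[μ] fun ω => φ ((μ[A (τ k i) (τ k (i + 1)) | ℱ (τ k i)]) ω) :=
        hcomm.symm
      calc eLpNorm (G k i) p' μ
          = eLpNorm (fun ω => φ ((μ[A (τ k i) (τ k (i + 1)) | ℱ (τ k i)]) ω)) p' μ :=
            eLpNorm_congr_ae heq
        _ ≤ ‖φ‖₊ • eLpNorm (μ[A (τ k i) (τ k (i + 1)) | ℱ (τ k i)]) p' μ := by
            refine eLpNorm_le_nnreal_smul_eLpNorm_of_ae_le_mul ?_ p'
            exact Eventually.of_forall fun ω => φ.le_opNNNorm _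
        _ ≤ ‖φ‖₊ • ENNReal.ofReal (Γ₃ * (τ k (i + 1) - τ k i) ^ η'') := by
            have := hcondA _ _ (hτ0' k i) (hτmono k (Nat.le_succ i)) (hτT k (i + 1) hi)
            exact mul_le_mul_right this _
        _ = ENNReal.ofReal (‖φ‖ * (Γ₃ * ((t - s) / ((k : ℝ) + 1)) ^ η'')) := by
            rw [hτgap k i, ENNReal.smul_def, smul_eq_mul, ← ENNReal.ofReal_coe_nnreal, coe_nnnorm,
              ← ENNReal.ofReal_mul (norm_nonneg φ)]
    have hGaesm : ∀ k i, AEStronglyMeasurable (G k i) μ :=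
      fun k i => (stronglyMeasurable_condExp.mono (ℱ.le (τ k i))).aestronglyMeasurable
    have hGm : ∀ k, ∀ i < k + 1, MemLp (G k i) p' μ := by
      intro k i hi
      exact ⟨hGaesm k i, lt_of_le_of_lt (hGb k i hi) ENNReal.ofReal_lt_top⟩
    have hYm2 : ∀ k, ∀ i < k + 1, MemLp (Y k i) 2 μ :=
      fun k i hi => (hYm k i hi).mono_exponent h2p'
    have hGm2 : ∀ k, ∀ i < k + 1, MemLp (G k i) 2 μ :=
      fun k i hi => (hGm k i hi).mono_exponent h2p'
    have hdm2 : ∀ k, ∀ i < k + 1, MemLp (d k i) 2 μ :=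
      fun k i hi => (hYm2 k i hi).sub (hGm2 k i hi)
    -- L² bounds on d
    have hdb : ∀ k, ∀ i < k + 1, eLpNorm (d k i) 2 μ
        ≤ ENNReal.ofReal (‖φ‖ * (Γ₁ * ((t - s) / ((k : ℝ) + 1)) ^ η)
            + ‖φ‖ * (Γ₃ * ((t - s) / ((k : ℝ) + 1)) ^ η'')) := by
      intro k i hi
      have h1 : eLpNorm (d k i) 2 μ ≤ eLpNorm (Y k i) 2 μ + eLpNorm (G k i) 2 μ :=
        eLpNorm_sub_le (hYm2 k i hi).aestronglyMeasurable (hGm2 k i hi).aestronglyMeasurable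
          one_le_two
      have h2 : eLpNorm (Y k i) 2 μ ≤ ENNReal.ofReal (‖φ‖ * (Γ₁ * ((t - s) / ((k : ℝ) + 1)) ^ η)) :=
        le_trans (eLpNorm_le_eLpNorm_of_exponent_le h2p' (hYm k i hi).aestronglyMeasurable)
          (hYb k i hi)
      have h3 : eLpNorm (G k i) 2 μ
          ≤ ENNReal.ofReal (‖φ‖ * (Γ₃ * ((t - s) / ((k : ℝ) + 1)) ^ η'')) :=
        le_trans (eLpNorm_le_eLpNorm_of_exponent_le h2p' (hGaesm k i)) (hGb k i hi)
      calc eLpNorm (d k i) 2 μ ≤ eLpNorm (Y k i) 2 μ + eLpNorm (G k i) 2 μ := h1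
        _ ≤ ENNReal.ofReal (‖φ‖ * (Γ₁ * ((t - s) / ((k : ℝ) + 1)) ^ η))
            + ENNReal.ofReal (‖φ‖ * (Γ₃ * ((t - s) / ((k : ℝ) + 1)) ^ η'')) :=
            add_le_add h2 h3
        _ = _ := by
            rw [← ENNReal.ofReal_add (hC1 k) (hC3 k)]
    -- measurability of d with respect to the filtration
    have hYSM : ∀ k, ∀ i < k + 1, StronglyMeasurable[ℱ (τ k (i + 1))] (Y k i) := by
      intro k i hi
      exact φ.continuous.comp_stronglyMeasurable
        (hadapted _ _ (hτ0' k i) (hτmono k (Nat.le_succ i)) (hτT k (i + 1) hi))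
    have hdSM : ∀ k, ∀ i < k + 1, StronglyMeasurable[ℱ (τ k (i + 1))] (d k i) := by
      intro k i hi
      exact (hYSM k i hi).sub (stronglyMeasurable_condExp.mono (ℱ.mono (hτmono k (Nat.le_succ i))))
    -- conditional expectation of d vanishes
    have hd0 : ∀ k, ∀ i < k + 1, μ[d k i | ℱ (τ k i)] =ᵐ[μ] 0 := by
      intro k i hi
      have hYint : Integrable (Y k i) μ := (hYm2 k i hi).integrable one_le_two
      have h1 : μ[d k i | ℱ (τ k i)] =ᵐ[μ] μ[Y k i | ℱ (τ k i)] - μ[G k i | ℱ (τ k i)] :=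
        condExp_sub hYint integrable_condExp _
      have h2 : μ[G k i | ℱ (τ k i)] = G k i :=
        condExp_of_stronglyMeasurable (ℱ.le (τ k i)) stronglyMeasurable_condExp
          integrable_condExp
      filter_upwards [h1] with ω hω
      rw [Pi.zero_apply, hω, h2, Pi.sub_apply]
      simp [hGdef]
    -- the key quantitative estimate on the Riemann sums
    set B : ℕ → ℝ := fun k =>
      ((k : ℝ) + 1) * (‖φ‖ * (Γ₃ * ((t - s) / ((k : ℝ) + 1)) ^ η''))
        + Real.sqrt ((k : ℝ) + 1) * (‖φ‖ * (Γ₁ * ((t - s) / ((k : ℝ) + 1)) ^ η)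
            + ‖φ‖ * (Γ₃ * ((t - s) / ((k : ℝ) + 1)) ^ η'')) with hBdef
    have keyest : ∀ k : ℕ,
        eLpNorm (fun ω => φ (riemannSum A (k + 1) (τ k) ω)) 2 μ ≤ ENNReal.ofReal (B k) := by
      intro k
      set m : ℕ := k + 1 with hmdef
      set b : ℝ := ‖φ‖ * (Γ₁ * ((t - s) / ((k : ℝ) + 1)) ^ η)
          + ‖φ‖ * (Γ₃ * ((t - s) / ((k : ℝ) + 1)) ^ η'') with hbdef
      have hb0 : 0 ≤ b := add_nonneg (hC1 k) (hC3 k)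
      -- Lp elements for the martingale differences
      set D : ℕ → Lp ℝ 2 μ := fun i =>
        if hi : i < m then ((hdm2 k i hi).toLp (d k i)) else 0 with hDdef
      -- orthogonality
      have horth : ∀ j < m, ∀ i < j, (inner ℝ (D i) (D j) : ℝ) = 0 := by
        intro j hj i hij
        have hi : i < m := hij.trans hj
        rw [hDdef]
        simp only [dif_pos hi, dif_pos hj]
        rw [L2.inner_def]
        have heq : (fun ω => (inner ℝ (((hdm2 k i hi).toLp (d k i)) ω)
            (((hdm2 k j hj).toLp (d k j)) ω) : ℝ))
            =ᵐ[μ] fun ω => d k i ω * d k j ω := by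
          filter_upwards [(hdm2 k i hi).coeFn_toLp, (hdm2 k j hj).coeFn_toLp] with ω h1 h2
          simp [h1, h2, RCLike.inner_apply, mul_comm]
        rw [integral_congr_ae heq]
        refine integral_mul_eq_zero_of_condexp (ℱ.le (τ k j)) (hdm2 k i hi) (hdm2 k j hj)
          ?_ (hd0 k j hj)
        exact ((hdSM k i hi).mono (ℱ.mono (hτmono k hij))).aestronglyMeasurable
      -- norm bounds on each D i
      have hDb : ∀ i < m, ‖D i‖ ≤ b := by
        intro i hi
        rw [hDdef]
        simp only [dif_pos hi]
        rw [Lp.norm_toLp]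
        exact ENNReal.toReal_le_of_le_ofReal hb0 (hdb k i hi)
      -- Pythagoras bound
      have hDsum : ‖∑ i ∈ Finset.range m, D i‖ ≤ Real.sqrt ((k : ℝ) + 1) * b := by
        have h1 : ‖∑ i ∈ Finset.range m, D i‖ ^ 2 = ∑ i ∈ Finset.range m, ‖D i‖ ^ 2 :=
          norm_sum_sq_of_inner_eq_zero D m horth
        have h2 : ∑ i ∈ Finset.range m, ‖D i‖ ^ 2 ≤ (m : ℝ) * b ^ 2 := by
          calc ∑ i ∈ Finset.range m, ‖D i‖ ^ 2 ≤ ∑ _i ∈ Finset.range m, b ^ 2 :=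
              Finset.sum_le_sum fun i hi =>
                pow_le_pow_left₀ (norm_nonneg _) (hDb i (Finset.mem_range.mp hi)) 2
            _ = (m : ℝ) * b ^ 2 := by
              rw [Finset.sum_const, Finset.card_range, nsmul_eq_mul]
        have h3 : ‖∑ i ∈ Finset.range m, D i‖ ^ 2 ≤ ((k : ℝ) + 1) * b ^ 2 := by
          rw [h1]
          convert h2 using 2
          rw [hmdef]; push_cast; ring
        calc ‖∑ i ∈ Finset.range m, D i‖
            = Real.sqrt (‖∑ i ∈ Finset.range m, D i‖ ^ 2) := (Real.sqrt_sq (norm_nonneg _)).symm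
          _ ≤ Real.sqrt (((k : ℝ) + 1) * b ^ 2) := Real.sqrt_le_sqrt h3
          _ = Real.sqrt ((k : ℝ) + 1) * b := by
              rw [Real.sqrt_mul (by positivity), Real.sqrt_sq hb0]
      -- eLpNorm of the sum of martingale differences
      have hdsum_eq : eLpNorm (fun ω => ∑ i ∈ Finset.range m, d k i ω) 2 μ
          = ENNReal.ofReal ‖∑ i ∈ Finset.range m, D i‖ := by
        have hco : (fun ω => ∑ i ∈ Finset.range m, d k i ω)
            =ᵐ[μ] ⇑(∑ i ∈ Finset.range m, D i) := by
          have h1 : ∀ᵐ ω ∂μ, ∀ i ∈ Finset.range m, (D i) ω = d k i ω := by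
            rw [Filter.eventually_all_finset]
            intro i hi
            have hi' := Finset.mem_range.mp hi
            rw [hDdef]
            simp only [dif_pos hi']
            exact (hdm2 k i hi').coeFn_toLp
          filter_upwards [coeFn_lp_sum D (Finset.range m), h1] with ω h2 h3
          rw [h2]
          exact (Finset.sum_congr rfl fun i hi => (h3 i hi)).symm
        rw [eLpNorm_congr_ae hco, ← ENNReal.ofReal_toReal
          (Lp.eLpNorm_ne_top (∑ i ∈ Finset.range m, D i)), ← Lp.norm_def]
      -- decomposition of φ ∘ Riemann sum
      have hdecomp : (fun ω => φ (riemannSum A m (τ k) ω))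
          = (fun ω => ∑ i ∈ Finset.range m, G k i ω) + fun ω => ∑ i ∈ Finset.range m, d k i ω := by
        funext ω
        simp only [Pi.add_apply, riemannSum, map_sum, ← Finset.sum_add_distrib]
        refine Finset.sum_congr rfl fun i _ => ?_
        simp only [hddef, Pi.sub_apply, hYdef]
        ring
      -- bound on the conditional-expectation part
      have hGsum : eLpNorm (fun ω => ∑ i ∈ Finset.range m, G k i ω) 2 μ
          ≤ ENNReal.ofReal (((k : ℝ) + 1) * (‖φ‖ * (Γ₃ * ((t - s) / ((k : ℝ) + 1)) ^ η''))) := by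
        have hfsum : (fun ω => ∑ i ∈ Finset.range m, G k i ω)
            = ∑ i ∈ Finset.range m, G k i := by
          funext ω
          simp [Finset.sum_apply]
        calc eLpNorm (fun ω => ∑ i ∈ Finset.range m, G k i ω) 2 μ
            = eLpNorm (∑ i ∈ Finset.range m, G k i) 2 μ := by rw [hfsum]
          _ ≤ ∑ i ∈ Finset.range m, eLpNorm (G k i) 2 μ :=
              eLpNorm_sum_le (fun i _ => hGaesm k i) one_le_two
          _ ≤ ∑ _i ∈ Finset.range m,
              ENNReal.ofReal (‖φ‖ * (Γ₃ * ((t - s) / ((k : ℝ) + 1)) ^ η'')) :=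
              Finset.sum_le_sum fun i hi =>
                le_trans (eLpNorm_le_eLpNorm_of_exponent_le h2p' (hGaesm k i))
                  (hGb k i (Finset.mem_range.mp hi))
          _ = ENNReal.ofReal (((k : ℝ) + 1) * (‖φ‖ * (Γ₃ * ((t - s) / ((k : ℝ) + 1)) ^ η''))) := by
              have hcast : ((m : ℕ) : ℝ≥0∞) = ENNReal.ofReal ((k : ℝ) + 1) := by
                rw [hmdef, ← ENNReal.ofReal_natCast]
                push_cast
                rfl
              rw [Finset.sum_const, Finset.card_range, nsmul_eq_mul, hcast,
                ← ENNReal.ofReal_mul (by positivity)]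
      -- combine
      have hGmem2 : MemLp (fun ω => ∑ i ∈ Finset.range m, G k i ω) 2 μ :=
        memLp_finset_sum (Finset.range m) fun i hi => hGm2 k i (Finset.mem_range.mp hi)
      have hdmem2 : MemLp (fun ω => ∑ i ∈ Finset.range m, d k i ω) 2 μ :=
        memLp_finset_sum (Finset.range m) fun i hi => hdm2 k i (Finset.mem_range.mp hi)
      calc eLpNorm (fun ω => φ (riemannSum A (k + 1) (τ k) ω)) 2 μ
          = eLpNorm ((fun ω => ∑ i ∈ Finset.range m, G k i ω)
              + fun ω => ∑ i ∈ Finset.range m, d k i ω) 2 μ := by rw [← hdecomp]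
        _ ≤ eLpNorm (fun ω => ∑ i ∈ Finset.range m, G k i ω) 2 μ
            + eLpNorm (fun ω => ∑ i ∈ Finset.range m, d k i ω) 2 μ :=
            eLpNorm_add_le hGmem2.aestronglyMeasurable hdmem2.aestronglyMeasurable one_le_two
        _ ≤ ENNReal.ofReal (((k : ℝ) + 1) * (‖φ‖ * (Γ₃ * ((t - s) / ((k : ℝ) + 1)) ^ η'')))
            + ENNReal.ofReal (Real.sqrt ((k : ℝ) + 1) * b) := by
            refine add_le_add hGsum ?_
            rw [hdsum_eq]
            exact ENNReal.ofReal_le_ofReal hDsum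
        _ = ENNReal.ofReal (B k) := by
            rw [← ENNReal.ofReal_add (mul_nonneg (by positivity) (hC3 k))
              (mul_nonneg (Real.sqrt_nonneg _) hb0)]
    -- B k → 0
    have hB0 : Tendsto B atTop (nhds 0) := by
      have hT1 : Tendsto (fun k : ℕ =>
          (‖φ‖ * Γ₃) * (((k : ℝ) + 1) ^ (1 : ℝ) * ((t - s) / ((k : ℝ) + 1)) ^ η''))
          atTop (nhds ((‖φ‖ * Γ₃) * 0)) :=
        Tendsto.const_mul _ (tendsto_pow_div_rpow (t - s) hc 1 η'' hη'')
      have hT2 : Tendsto (fun k : ℕ =>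
          (‖φ‖ * Γ₁) * (((k : ℝ) + 1) ^ (1/2 : ℝ) * ((t - s) / ((k : ℝ) + 1)) ^ η))
          atTop (nhds ((‖φ‖ * Γ₁) * 0)) :=
        Tendsto.const_mul _ (tendsto_pow_div_rpow (t - s) hc (1/2) η hη)
      have hT3 : Tendsto (fun k : ℕ =>
          (‖φ‖ * Γ₃) * (((k : ℝ) + 1) ^ (1/2 : ℝ) * ((t - s) / ((k : ℝ) + 1)) ^ η''))
          atTop (nhds ((‖φ‖ * Γ₃) * 0)) :=
        Tendsto.const_mul _ (tendsto_pow_div_rpow (t - s) hc (1/2) η'' (by linarith))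
      have heqB : B = fun k : ℕ =>
          (‖φ‖ * Γ₃) * (((k : ℝ) + 1) ^ (1 : ℝ) * ((t - s) / ((k : ℝ) + 1)) ^ η'')
          + ((‖φ‖ * Γ₁) * (((k : ℝ) + 1) ^ (1/2 : ℝ) * ((t - s) / ((k : ℝ) + 1)) ^ η)
            + (‖φ‖ * Γ₃) * (((k : ℝ) + 1) ^ (1/2 : ℝ) * ((t - s) / ((k : ℝ) + 1)) ^ η'')) := by
        funext k
        simp only [hBdef]
        rw [Real.sqrt_eq_rpow, Real.rpow_one]
        ring
      rw [heqB]
      have := (hT1.add (hT2.add hT3))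
      simpa using this
    -- limit of eLpNorm (φ ∘ S_k) 2
    have hlimφS : Tendsto
        (fun k => eLpNorm (fun ω => φ (riemannSum A (k + 1) (τ k) ω)) 2 μ) atTop (nhds 0) := by
      have hupper : Tendsto (fun k => ENNReal.ofReal (B k)) atTop (nhds 0) := by
        have := ENNReal.tendsto_ofReal hB0
        simpa using this
      exact tendsto_of_tendsto_of_tendsto_of_le_of_le tendsto_const_nhds hupper
        (fun k => zero_le) keyest
    -- limit of eLpNorm (φ ∘ S_k - φ ∘ I) 2
    have hlimφdiff : Tendsto
        (fun k => eLpNorm (fun ω => φ (riemannSum A (k + 1) (τ k) ω) - φ (I s t ω)) 2 μ)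
        atTop (nhds 0) := by
      have hbnd : ∀ k, eLpNorm (fun ω => φ (riemannSum A (k + 1) (τ k) ω) - φ (I s t ω)) 2 μ
          ≤ (‖φ‖₊ : ℝ≥0∞) * eLpNorm (fun ω => riemannSum A (k + 1) (τ k) ω - I s t ω) p' μ := by
        intro k
        have h1 : eLpNorm (fun ω => φ (riemannSum A (k + 1) (τ k) ω) - φ (I s t ω)) 2 μ
            ≤ ‖φ‖₊ • eLpNorm (fun ω => riemannSum A (k + 1) (τ k) ω - I s t ω) 2 μ := by
          refine eLpNorm_le_nnreal_smul_eLpNorm_of_ae_le_mul ?_ 2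
          refine Eventually.of_forall fun ω => ?_
          rw [← map_sub]
          exact φ.le_opNNNorm _
        have h2 : eLpNorm (fun ω => riemannSum A (k + 1) (τ k) ω - I s t ω) 2 μ
            ≤ eLpNorm (fun ω => riemannSum A (k + 1) (τ k) ω - I s t ω) p' μ :=
          eLpNorm_le_eLpNorm_of_exponent_le h2p'
            ((hmemS k).sub hImem).aestronglyMeasurable
        calc eLpNorm (fun ω => φ (riemannSum A (k + 1) (τ k) ω) - φ (I s t ω)) 2 μ
            ≤ ‖φ‖₊ • eLpNorm (fun ω => riemannSum A (k + 1) (τ k) ω - I s t ω) 2 μ := h1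
          _ = (‖φ‖₊ : ℝ≥0∞) * eLpNorm (fun ω => riemannSum A (k + 1) (τ k) ω - I s t ω) 2 μ := by
              rw [ENNReal.smul_def, smul_eq_mul]
          _ ≤ (‖φ‖₊ : ℝ≥0∞) * eLpNorm (fun ω => riemannSum A (k + 1) (τ k) ω - I s t ω) p' μ :=
              mul_le_mul_right h2 _
      have hupper : Tendsto (fun k => (‖φ‖₊ : ℝ≥0∞)
          * eLpNorm (fun ω => riemannSum A (k + 1) (τ k) ω - I s t ω) p' μ) atTop (nhds 0) := by
        have := ENNReal.Tendsto.const_mul (a := (‖φ‖₊ : ℝ≥0∞)) hlimS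
          (Or.inr ENNReal.coe_ne_top)
        simpa using this
      exact tendsto_of_tendsto_of_tendsto_of_le_of_le tendsto_const_nhds hupper
        (fun k => zero_le) hbnd
    -- triangle inequality
    have hφImem : MemLp (fun ω => φ (I s t ω)) 2 μ :=
      (φ.comp_memLp' hImem).mono_exponent h2p'
    have hφSmem : ∀ k, MemLp (fun ω => φ (riemannSum A (k + 1) (τ k) ω)) 2 μ :=
      fun k => (φ.comp_memLp' (hmemS k)).mono_exponent h2p'
    have htri : ∀ k, eLpNorm (fun ω => φ (I s t ω)) 2 μ
        ≤ eLpNorm (fun ω => φ (riemannSum A (k + 1) (τ k) ω) - φ (I s t ω)) 2 μ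
          + eLpNorm (fun ω => φ (riemannSum A (k + 1) (τ k) ω)) 2 μ := by
      intro k
      have heq : (fun ω => φ (I s t ω)) = (fun ω => φ (I s t ω)
          - φ (riemannSum A (k + 1) (τ k) ω)) + fun ω => φ (riemannSum A (k + 1) (τ k) ω) := by
        funext ω; simp
      calc eLpNorm (fun ω => φ (I s t ω)) 2 μ
          = eLpNorm ((fun ω => φ (I s t ω) - φ (riemannSum A (k + 1) (τ k) ω))
              + fun ω => φ (riemannSum A (k + 1) (τ k) ω)) 2 μ := by rw [← heq]
        _ ≤ eLpNorm (fun ω => φ (I s t ω) - φ (riemannSum A (k + 1) (τ k) ω)) 2 μ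
            + eLpNorm (fun ω => φ (riemannSum A (k + 1) (τ k) ω)) 2 μ :=
            eLpNorm_add_le (hφImem.sub (hφSmem k)).aestronglyMeasurable
              (hφSmem k).aestronglyMeasurable one_le_two
        _ = eLpNorm (fun ω => φ (riemannSum A (k + 1) (τ k) ω) - φ (I s t ω)) 2 μ
            + eLpNorm (fun ω => φ (riemannSum A (k + 1) (τ k) ω)) 2 μ := by
            have hneg : (fun ω => φ (I s t ω) - φ (riemannSum A (k + 1) (τ k) ω))
                = -(fun ω => φ (riemannSum A (k + 1) (τ k) ω) - φ (I s t ω)) := by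
              funext ω
              simp
            rw [hneg, eLpNorm_neg]
    have hzero : eLpNorm (fun ω => φ (I s t ω)) 2 μ = 0 := by
      have hsum : Tendsto (fun k =>
          eLpNorm (fun ω => φ (riemannSum A (k + 1) (τ k) ω) - φ (I s t ω)) 2 μ
          + eLpNorm (fun ω => φ (riemannSum A (k + 1) (τ k) ω)) 2 μ) atTop (nhds 0) := by
        have := hlimφdiff.add hlimφS
        simpa using this
      exact le_antisymm (ge_of_tendsto' hsum htri) (zero_le)
    exact (eLpNorm_eq_zero_iff hφImem.aestronglyMeasurable two_ne_zero).mp hzero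
  -- conclude by separation with dual functionals
  obtain ⟨g, hg_sm, hIg⟩ := hImem.aestronglyMeasurable
  refine ae_eq_zero_of_forall_dual_of_isSeparable ℝ
    (hg_sm.isSeparable_range) (fun c => key c) ?_
  filter_upwards [hIg] with ω hω
  exact ⟨ω, hω.symm⟩
end
end
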